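/- Let k ≥ 1 be an integer, let i be an integer with −k < i < k, and let s ∈ O_E^×. The orbit of the point [1 : π^i s] under the right action of the principal congruence subgroup Γ_k on P^1(E) is exactly the set {[1 : π^i s u] : u ∈ 1 + π^{min(k−i, k+i)} O_E}. -/

import Mathlib

/-!
Put `t = π^i s`, so `v t = i`, and `m = min (k - i) (k + i) ≥ 1`. For `g = (a b; c d) ∈ Γ_k`,
`[1 : t] · g = [1 : t u]` with `u = (b t⁻¹ + d) / (a + t c)`; since `b t⁻¹ ∈ π^(k-i) O_E` and
`t c ∈ π^(k+i) O_E`, numerator and denominator both lie in `1 + π^m O_E`, and so does `u`.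
Conversely every such `u` is reached by one transvection in `Γ_k`: the upper one with entry
`t (u - 1) ∈ π^k O_E` when `i ≥ 0`, the lower one with entry `(u⁻¹ - 1) t⁻¹ ∈ π^k O_E` when `i < 0`.
-/

noncomputable section

open Matrix

/-- A surjective discrete (rank-one) valuation on a field `E`, written additively.
This is the algebraic structure of a nonarchimedean local field used in the statements. -/
structure DiscreteVal (E : Type) [Field E] : Type where
  v : E → ℤ
  v_mul : ∀ x y : E, x ≠ 0 → y ≠ 0 → v (x * y) = v x + v y
  v_min_le_add : ∀ x y : E, x ≠ 0 → y ≠ 0 → x + y ≠ 0 → min (v x) (v y) ≤ v (x + y)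
  surj : ∀ n : ℤ, ∃ x : E, x ≠ 0 ∧ v x = n

namespace DiscreteVal

variable {E : Type} [Field E]

/-- The valuation ring `O_E = {x : x = 0 or v x ≥ 0}`. -/
def O (ν : DiscreteVal E) : Set E := {x : E | x = 0 ∨ 0 ≤ ν.v x}

/-- `π` is a uniformizer: `π ≠ 0` and `v π = 1`. -/
def IsUniformizer (ν : DiscreteVal E) (π : E) : Prop := π ≠ 0 ∧ ν.v π = 1

/-- The set `π^m · O_E` for `m : ℤ`. -/
def ball (ν : DiscreteVal E) (π : E) (m : ℤ) : Set E :=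
  {y : E | ∃ z ∈ ν.O, y = π ^ m * z}

end DiscreteVal

section ProjLine

variable {E : Type} [Field E]

/-- The point `[a : b]` of the projective line over `E`. -/
def projPt (a b : E) (h : a ≠ 0 ∨ b ≠ 0) : Projectivization E (Fin 2 → E) :=
  Projectivization.mk E ![a, b] (by
    intro hc
    rcases h with h | h
    · exact h (by simpa using congrFun hc 0)
    · exact h (by simpa using congrFun hc 1))

/-- The point `∞ = [0 : 1]`. -/
def inftyPt (E : Type) [Field E] : Projectivization E (Fin 2 → E) :=
  projPt 0 1 (Or.inr one_ne_zero)

/-- The point `[1 : t]`. -/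
def onePt (t : E) : Projectivization E (Fin 2 → E) :=
  projPt 1 t (Or.inl one_ne_zero)

theorem vecMulLinear_injective (g : SpecialLinearGroup (Fin 2) E) :
    Function.Injective (g.1.vecMulLinear) := by
  intro x y hxy
  have h1 : x ᵥ* g.1 = y ᵥ* g.1 := by
    simpa [Matrix.vecMulLinear_apply] using hxy
  have h3 : g.1 * (g⁻¹).1 = 1 := by
    rw [← Matrix.SpecialLinearGroup.coe_mul, mul_inv_cancel, Matrix.SpecialLinearGroup.coe_one]
  calc x = x ᵥ* (g.1 * (g⁻¹).1) := by rw [h3, Matrix.vecMul_one]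
    _ = (x ᵥ* g.1) ᵥ* (g⁻¹).1 := (Matrix.vecMul_vecMul x g.1 (g⁻¹).1).symm
    _ = (y ᵥ* g.1) ᵥ* (g⁻¹).1 := by rw [h1]
    _ = y ᵥ* (g.1 * (g⁻¹).1) := Matrix.vecMul_vecMul y g.1 (g⁻¹).1
    _ = y := by rw [h3, Matrix.vecMul_one]

/-- The right action `[w] · g := [w ᵥ* g]` of `SL₂(E)` on the projective line
(rows vectors times matrix). -/
def ract (x : Projectivization E (Fin 2 → E)) (g : SpecialLinearGroup (Fin 2) E) :
    Projectivization E (Fin 2 → E) :=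
  Projectivization.map (g.1.vecMulLinear) (vecMulLinear_injective g) x

/-- The orbit of `x` under a set `Γ` of elements of `SL₂(E)` (acting on the right). -/
def orbitOf (Γ : Set (SpecialLinearGroup (Fin 2) E))
    (x : Projectivization E (Fin 2 → E)) : Set (Projectivization E (Fin 2 → E)) :=
  {y | ∃ g ∈ Γ, y = ract x g}

variable (ν : DiscreteVal E) (π : E)

/-- The principal congruence subgroup `Γ_k` of level `k` (as a subset of `SL₂(E)`):
integral matrices congruent to the identity modulo `π^k`. -/
def congrSub (k : ℕ) : Set (SpecialLinearGroup (Fin 2) E) :=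
  {g | ∀ i j, g.1 i j - (1 : Matrix (Fin 2) (Fin 2) E) i j ∈ ν.ball π (k : ℤ)}

/-- The maximal compact subgroup `U = SL₂(O_E)` (as a subset of `SL₂(E)`). -/
def slIntegral : Set (SpecialLinearGroup (Fin 2) E) :=
  {g | ∀ i j, g.1 i j ∈ ν.O}

/-- The Iwahori subgroup `Γ₀` (as a subset): integral matrices whose
lower-left entry lies in `πO_E`. -/
def iwahori : Set (SpecialLinearGroup (Fin 2) E) :=
  {g | (∀ i j, g.1 i j ∈ ν.O) ∧ g.1 1 0 ∈ ν.ball π 1}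

/-- The subgroup `U' = diag(1,π) SL₂(O_E) diag(1,π)⁻¹` (as a subset), described
by entry conditions. -/
def slConj : Set (SpecialLinearGroup (Fin 2) E) :=
  {g | g.1 0 0 ∈ ν.O ∧ g.1 1 1 ∈ ν.O ∧ g.1 0 1 ∈ ν.ball π (-1) ∧ g.1 1 0 ∈ ν.ball π 1}

end ProjLine

namespace DiscreteVal

variable {E : Type} [Field E] (ν : DiscreteVal E)

lemma v_one : ν.v 1 = 0 := by
  have h := ν.v_mul 1 1 one_ne_zero one_ne_zero
  rw [mul_one] at h
  omega

lemma v_neg {x : E} (hx : x ≠ 0) : ν.v (-x) = ν.v x := by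
  have h₁ := ν.v_mul (-1) (-1) (neg_ne_zero.2 one_ne_zero) (neg_ne_zero.2 one_ne_zero)
  have h₂ := ν.v_mul (-1) x (neg_ne_zero.2 one_ne_zero) hx
  rw [neg_mul_neg, mul_one, v_one] at h₁
  rw [neg_one_mul] at h₂
  omega

lemma v_inv {x : E} (hx : x ≠ 0) : ν.v x⁻¹ = -ν.v x := by
  have h := ν.v_mul x x⁻¹ hx (inv_ne_zero hx)
  rw [mul_inv_cancel₀ hx, v_one] at h
  omega

lemma mem_O_iff {x : E} (hx : x ≠ 0) : x ∈ ν.O ↔ 0 ≤ ν.v x := by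
  simp [O, hx]

def integers : Subring E where
  carrier := ν.O
  zero_mem' := Or.inl rfl
  one_mem' := Or.inr ν.v_one.ge
  mul_mem' {x y} hx hy := by
    rcases eq_or_ne x 0 with rfl | hx0
    · exact Or.inl (zero_mul y)
    rcases eq_or_ne y 0 with rfl | hy0
    · exact Or.inl (mul_zero x)
    rw [ν.mem_O_iff hx0] at hx
    rw [ν.mem_O_iff hy0] at hy
    exact Or.inr (by rw [ν.v_mul x y hx0 hy0]; omega)
  add_mem' {x y} hx hy := by
    rcases eq_or_ne x 0 with rfl | hx0
    · rwa [zero_add]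
    rcases eq_or_ne y 0 with rfl | hy0
    · rwa [add_zero]
    rcases eq_or_ne (x + y) 0 with hxy | hxy
    · exact Or.inl hxy
    rw [ν.mem_O_iff hx0] at hx
    rw [ν.mem_O_iff hy0] at hy
    have := ν.v_min_le_add x y hx0 hy0 hxy
    exact Or.inr (by omega)
  neg_mem' {x} hx := by
    rcases eq_or_ne x 0 with rfl | hx0
    · exact Or.inl neg_zero
    exact Or.inr (by rw [ν.v_neg hx0]; exact (ν.mem_O_iff hx0).1 hx)

variable {ν} {π : E} {m n : ℤ} {x y : E}

lemma zero_mem_ball : (0 : E) ∈ ν.ball π m :=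
  ⟨0, ν.integers.zero_mem, (mul_zero _).symm⟩

lemma add_mem_ball (hx : x ∈ ν.ball π m) (hy : y ∈ ν.ball π m) : x + y ∈ ν.ball π m := by
  obtain ⟨z, hz, rfl⟩ := hx
  obtain ⟨w, hw, rfl⟩ := hy
  exact ⟨z + w, ν.integers.add_mem hz hw, (mul_add _ _ _).symm⟩

lemma neg_mem_ball (hx : x ∈ ν.ball π m) : -x ∈ ν.ball π m := by
  obtain ⟨z, hz, rfl⟩ := hx
  exact ⟨-z, ν.integers.neg_mem hz, (mul_neg _ _).symm⟩

lemma sub_mem_ball (hx : x ∈ ν.ball π m) (hy : y ∈ ν.ball π m) : x - y ∈ ν.ball π m :=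
  sub_eq_add_neg x y ▸ add_mem_ball hx (neg_mem_ball hy)

lemma mul_mem_ball_of_mem_O (hx : x ∈ ν.ball π m) (hy : y ∈ ν.O) : x * y ∈ ν.ball π m := by
  obtain ⟨z, hz, rfl⟩ := hx
  exact ⟨z * y, ν.integers.mul_mem hz hy, mul_assoc _ _ _⟩

lemma mul_mem_ball (hπ : π ≠ 0) (hx : x ∈ ν.ball π m) (hy : y ∈ ν.ball π n) :
    x * y ∈ ν.ball π (m + n) := by
  obtain ⟨z, hz, rfl⟩ := hx
  obtain ⟨w, hw, rfl⟩ := hy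
  exact ⟨z * w, ν.integers.mul_mem hz hw, by rw [zpow_add₀ hπ]; ring⟩

lemma ball_mono (hπ : ν.IsUniformizer π) (h : m ≤ n) : ν.ball π n ⊆ ν.ball π m := by
  obtain ⟨d, rfl⟩ : ∃ d : ℕ, n = m + d := ⟨(n - m).toNat, by omega⟩
  rintro _ ⟨z, hz, rfl⟩
  have hπO : π ∈ ν.O := Or.inr (hπ.2 ▸ zero_le_one)
  exact ⟨π ^ d * z, ν.integers.mul_mem (ν.integers.pow_mem hπO d) hz, by
    rw [zpow_add₀ hπ.1, zpow_natCast, mul_assoc]⟩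

lemma ne_zero_and_inv_mem_O (hπ : ν.IsUniformizer π) {u : E} (hu : u - 1 ∈ ν.ball π 1) :
    u ≠ 0 ∧ u⁻¹ ∈ ν.O := by
  obtain ⟨z, hz, hu⟩ := hu
  rw [zpow_one] at hu
  rcases eq_or_ne z 0 with rfl | hz0
  · rw [mul_zero, sub_eq_zero] at hu
    subst hu
    exact ⟨one_ne_zero, by rw [inv_one]; exact ν.integers.one_mem⟩
  have hε0 : u - 1 ≠ 0 := hu ▸ mul_ne_zero hπ.1 hz0
  have hε : 1 ≤ ν.v (u - 1) := by
    rw [hu, ν.v_mul _ _ hπ.1 hz0, hπ.2]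
    have := (ν.mem_O_iff hz0).1 hz
    omega
  have hu0 : u ≠ 0 := by
    rintro rfl
    rw [zero_sub, ν.v_neg one_ne_zero, ν.v_one] at hε
    omega
  -- `1 = u - (u - 1)` with `v (u - 1) ≥ 1` forces `v u ≤ 0`
  have hle := ν.v_min_le_add u (-(u - 1)) hu0 (neg_ne_zero.2 hε0) (by simp)
  rw [show u + -(u - 1) = 1 by ring, ν.v_one, ν.v_neg hε0] at hle
  exact ⟨hu0, Or.inr (by rw [ν.v_inv hu0]; omega)⟩

lemma div_sub_one_mem_ball (hπ : ν.IsUniformizer π) (hm : 1 ≤ m) {a b : E}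
    (ha : a - 1 ∈ ν.ball π m) (hb : b - 1 ∈ ν.ball π m) : a / b - 1 ∈ ν.ball π m := by
  obtain ⟨hb0, hbO⟩ := ne_zero_and_inv_mem_O hπ (ball_mono hπ hm hb)
  have h : a / b - 1 = ((a - 1) - (b - 1)) * b⁻¹ := by field_simp; ring
  exact h ▸ mul_mem_ball_of_mem_O (sub_mem_ball ha hb) hbO

end DiscreteVal

section ProjLine

open DiscreteVal

variable {E : Type} [Field E]

lemma ract_onePt (t : E) (g : SpecialLinearGroup (Fin 2) E) (h : g 0 0 + t * g 1 0 ≠ 0) :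
    ract (onePt t) g = onePt ((g 0 1 + t * g 1 1) / (g 0 0 + t * g 1 0)) := by
  unfold ract onePt projPt
  rw [Projectivization.map_mk, Projectivization.mk_eq_mk_iff]
  refine ⟨Units.mk0 _ h, ?_⟩
  ext j
  fin_cases j <;>
    simp [vecMul, dotProduct, Fin.sum_univ_two, Units.smul_def]
  field_simp

lemma ract_onePt_transvection_upper (t b : E) :
    ract (onePt t) (SpecialLinearGroup.transvection zero_ne_one b) = onePt (t + b) := by
  rw [ract_onePt _ _ (by simp [SpecialLinearGroup.transvection_coe])]
  simp [SpecialLinearGroup.transvection_coe, add_comm]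

lemma ract_onePt_transvection_lower (t c : E) (h : 1 + t * c ≠ 0) :
    ract (onePt t) (SpecialLinearGroup.transvection one_ne_zero c) = onePt (t / (1 + t * c)) := by
  rw [ract_onePt _ _ (by simpa [SpecialLinearGroup.transvection_coe] using h)]
  simp [SpecialLinearGroup.transvection_coe]

variable {ν : DiscreteVal E} {π : E} {k : ℕ}

lemma mem_congrSub_iff {g : SpecialLinearGroup (Fin 2) E} :
    g ∈ congrSub ν π k ↔ g 0 0 - 1 ∈ ν.ball π k ∧ g 0 1 ∈ ν.ball π k ∧
      g 1 0 ∈ ν.ball π k ∧ g 1 1 - 1 ∈ ν.ball π k := by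
  simp [congrSub, Fin.forall_fin_two, one_apply, and_assoc]

lemma transvection_mem_congrSub {i j : Fin 2} (hij : i ≠ j) {b : E} (hb : b ∈ ν.ball π k) :
    SpecialLinearGroup.transvection hij b ∈ congrSub ν π k := by
  intro a c
  rw [SpecialLinearGroup.transvection_coe, Matrix.add_apply, add_sub_cancel_left, single_apply]
  split_ifs
  exacts [hb, zero_mem_ball]

variable {t : E} {i : ℤ}

lemma exists_ract_onePt_eq_mul_of_mem_congrSub (hπ : ν.IsUniformizer π) (ht0 : t ≠ 0)
    (ht : t ∈ ν.ball π i) (ht' : t⁻¹ ∈ ν.ball π (-i)) {m : ℤ} (hm : 1 ≤ m)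
    (hmk : m ≤ k - i) (hmk' : m ≤ k + i) {g : SpecialLinearGroup (Fin 2) E}
    (hg : g ∈ congrSub ν π k) :
    ∃ u : E, u - 1 ∈ ν.ball π m ∧ ract (onePt t) g = onePt (t * u) := by
  obtain ⟨ha, hb, hc, hd⟩ := mem_congrSub_iff.1 hg
  have hden : g 0 0 + t * g 1 0 - 1 ∈ ν.ball π m := by
    rw [show g 0 0 + t * g 1 0 - 1 = (g 0 0 - 1) + t * g 1 0 by ring]
    exact add_mem_ball (ball_mono hπ (by omega) ha)
      (ball_mono hπ (by omega) (mul_mem_ball hπ.1 ht hc))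
  have hnum : (g 0 1 + t * g 1 1) * t⁻¹ - 1 ∈ ν.ball π m := by
    rw [show (g 0 1 + t * g 1 1) * t⁻¹ - 1 = g 0 1 * t⁻¹ + (g 1 1 - 1) by field_simp; ring]
    exact add_mem_ball (ball_mono hπ (by omega) (mul_mem_ball hπ.1 hb ht'))
      (ball_mono hπ (by omega) hd)
  have hden0 := (ne_zero_and_inv_mem_O hπ (ball_mono hπ hm hden)).1
  refine ⟨_, div_sub_one_mem_ball hπ hm hnum hden, ?_⟩
  rw [ract_onePt t g (sub_add_cancel (g 0 0 + t * g 1 0) 1 ▸ hden0)]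
  congr 1
  field_simp

lemma onePt_mul_mem_orbit_congrSub_of_upper (hπ : π ≠ 0) (ht : t ∈ ν.ball π i) {u : E}
    (hu : u - 1 ∈ ν.ball π (k - i)) :
    onePt (t * u) ∈ orbitOf (congrSub ν π k) (onePt t) := by
  refine ⟨_, transvection_mem_congrSub zero_ne_one (by simpa using mul_mem_ball hπ ht hu), ?_⟩
  rw [ract_onePt_transvection_upper]
  congr 1
  ring

lemma onePt_mul_mem_orbit_congrSub_of_lower (hπ : ν.IsUniformizer π) (ht0 : t ≠ 0)
    (ht' : t⁻¹ ∈ ν.ball π (-i)) (hki : 1 ≤ k + i) {u : E} (hu : u - 1 ∈ ν.ball π (k + i)) :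
    onePt (t * u) ∈ orbitOf (congrSub ν π k) (onePt t) := by
  have hu0 := (ne_zero_and_inv_mem_O hπ (ball_mono hπ hki hu)).1
  have hinv : u⁻¹ - 1 ∈ ν.ball π (k + i) :=
    one_div u ▸ div_sub_one_mem_ball hπ hki (by rw [sub_self]; exact zero_mem_ball) hu
  have hc : (u⁻¹ - 1) * t⁻¹ ∈ ν.ball π k := by simpa using mul_mem_ball hπ.1 hinv ht'
  have hden : 1 + t * ((u⁻¹ - 1) * t⁻¹) = u⁻¹ := by field_simp; ring
  refine ⟨_, transvection_mem_congrSub one_ne_zero hc, ?_⟩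
  rw [ract_onePt_transvection_lower _ _ (by rw [hden]; exact inv_ne_zero hu0), hden,
    div_inv_eq_mul]

end ProjLine

theorem congrSub_orbit_of_middle_general
    {E : Type} [Field E] (ν : DiscreteVal E) (π : E) (hπ : ν.IsUniformizer π)
    (k : ℕ) (i : ℤ) (hi₁ : -(k : ℤ) < i) (hi₂ : i < (k : ℤ))
    (s : E) (hs₀ : s ≠ 0) (hs : ν.v s = 0) :
    orbitOf (congrSub ν π k) (onePt (π ^ i * s)) =
      {y | ∃ u : E, u - 1 ∈ ν.ball π (min ((k : ℤ) - i) ((k : ℤ) + i)) ∧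
        y = onePt (π ^ i * s * u)} := by
  have ht0 : π ^ i * s ≠ 0 := mul_ne_zero (zpow_ne_zero i hπ.1) hs₀
  have ht : π ^ i * s ∈ ν.ball π i := ⟨s, Or.inr hs.ge, rfl⟩
  have ht' : (π ^ i * s)⁻¹ ∈ ν.ball π (-i) :=
    ⟨s⁻¹, Or.inr (by rw [ν.v_inv hs₀, hs, neg_zero]), by rw [mul_inv, _root_.zpow_neg]⟩
  ext y
  constructor
  · rintro ⟨g, hg, rfl⟩
    exact exists_ract_onePt_eq_mul_of_mem_congrSub hπ ht0 ht ht' (by omega)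
      (min_le_left _ _) (min_le_right _ _) hg
  · rintro ⟨u, hu, rfl⟩
    rcases le_or_gt 0 i with hi | hi
    · rw [min_eq_left (by omega)] at hu
      exact onePt_mul_mem_orbit_congrSub_of_upper hπ.1 ht hu
    · rw [min_eq_right (by omega)] at hu
      exact onePt_mul_mem_orbit_congrSub_of_lower hπ ht0 ht' (by omega) hu

theorem congrSub_orbit_of_middle
    {E : Type} [Field E] (ν : DiscreteVal E) (π : E) (hπ : ν.IsUniformizer π)
    (k : ℕ) (hk : 1 ≤ k) (i : ℤ) (hi₁ : -(k : ℤ) < i) (hi₂ : i < (k : ℤ))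
    (s : E) (hs₀ : s ≠ 0) (hs : ν.v s = 0) :
    orbitOf (congrSub ν π k) (onePt (π ^ i * s)) =
      {y | ∃ u : E, u - 1 ∈ ν.ball π (min ((k : ℤ) - i) ((k : ℤ) + i)) ∧
        y = onePt (π ^ i * s * u)} :=
  congrSub_orbit_of_middle_general ν π hπ k i hi₁ hi₂ s hs₀ hs
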